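/- Let (A_p, A_s, <) be a regular bipartite poset (between consecutive maximum antichains), and let a maximum antichain A_t be inserted between them such that (A_p, A_t, <) and (A_t, A_s, <) are both regular bipartite posets and the comparability between A_p and A_s factors through A_t. Then for every connected component M of the comparability graph of (A_p, A_t, <) (or of (A_t, A_s, <)) there is a unique connected component N of (A_p, A_s, <) with Int(M) ⊊ Int(N). -/

import Mathlib

/-!
Write `L, M, U` for `A_p, A_t, A_s`. Every edge of `(L, M)` has a common upper bound in `U`, and
two elements of `U` above a common vertex of `(L, M)` are joined in `(L, U)` through an element
of `L` below that vertex. Hence all elements of `U` above a node `S` of `(L, M)` lie in a single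
node `N` of `(L, U)`, and `Int(S) ⊆ Int(N)`. The inclusion is strict since an element of `U`
above `S` lies in `Int(N)` but below no element of the antichain `M`. Uniqueness holds because
`Int(S)` contains an element of the antichain `L`, which can only lie above itself. Nodes of
`(A_t, A_s)` are handled by the same argument in the order dual.
-/

/-- Adjacency in the bipartite comparability graph between antichains `A` and `B`. -/
def bipAdj {α : Type*} [PartialOrder α] (A B : Finset α) (a b : α) : Prop :=
  (a ∈ A ∧ b ∈ B ∧ a < b) ∨ (b ∈ A ∧ a ∈ B ∧ b < a)

/-- A node of the bipartite poset `(A, B, <)`: a connected component of its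
comparability graph. -/
def IsNodeOf {α : Type*} [PartialOrder α] [DecidableEq α] (A B : Finset α)
    (S : Set α) : Prop :=
  ∃ v ∈ A ∪ B, S = {u | Relation.ReflTransGen (bipAdj A B) v u}

/-- The interval of a node `S` of `(A, B, <)`. -/
def nodeIntOf {α : Type*} [PartialOrder α] (A B : Finset α) (S : Set α) : Set α :=
  {p | (∃ x ∈ S ∩ (A : Set α), x ≤ p) ∧ ∃ y ∈ S ∩ (B : Set α), p ≤ y}

/-- A bipartite poset `(X, Y, <)` is regular if every comparability edge `x < y`
extends to a perfect matching between `X` and `Y`. -/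
def IsRegularBipartite {α : Type*} [PartialOrder α] (X Y : Finset α) : Prop :=
  ∀ x, ∀ hx : x ∈ X, ∀ y, ∀ hy : y ∈ Y, x < y →
    ∃ f : {a // a ∈ X} → {b // b ∈ Y},
      Function.Bijective f ∧ (∀ a : {a // a ∈ X}, (a : α) < (f a : α)) ∧ f ⟨x, hx⟩ = ⟨y, hy⟩

open Relation

lemma setOf_reflTransGen_eq {α : Type*} {r : α → α → Prop} [Std.Symm r] {v w : α}
    (h : ReflTransGen r v w) : {u | ReflTransGen r v u} = {u | ReflTransGen r w u} := by
  ext u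
  exact ⟨(Std.Symm.symm _ _ h).trans, h.trans⟩

section BipartiteComponents

variable {α : Type*} [PartialOrder α]

instance (A B : Finset α) : Std.Symm (bipAdj A B) :=
  ⟨fun _ _ h => h.symm⟩

lemma bipAdj.mem_or_mem_right {A B : Finset α} {a b : α} (h : bipAdj A B a b) :
    b ∈ A ∨ b ∈ B := by
  rcases h with ⟨-, hb, -⟩ | ⟨hb, -, -⟩
  · exact .inr hb
  · exact .inl hb

lemma bipAdj_toDual (A B : Finset α) : bipAdj (α := αᵒᵈ) B A = bipAdj A B := by
  ext a b
  exact Or.comm.trans (or_congr and_left_comm and_left_comm)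

lemma isNodeOf_toDual [DecidableEq α] (A B : Finset α) (S : Set αᵒᵈ) :
    IsNodeOf (α := αᵒᵈ) B A S ↔ IsNodeOf A B S := by
  simp only [IsNodeOf, bipAdj_toDual, Finset.mem_union]
  exact exists_congr fun _ => and_congr_left' (Finset.mem_union.trans Or.comm)

lemma nodeIntOf_toDual (A B : Finset α) (S : Set αᵒᵈ) :
    nodeIntOf (α := αᵒᵈ) B A S = nodeIntOf A B S := by
  ext p
  exact and_comm

variable {L M U : Finset α}

lemma exists_le_reflTransGen (hML : ∀ m ∈ M, ∃ l ∈ L, l < m) {v : α} (hv : v ∈ L ∨ v ∈ M) :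
    ∃ l ∈ L, l ≤ v ∧ ReflTransGen (bipAdj L M) v l := by
  rcases hv with hv | hv
  · exact ⟨v, hv, le_rfl, .refl⟩
  · obtain ⟨l, hl, hlv⟩ := hML v hv
    exact ⟨l, hl, hlv.le, .single (Or.inr ⟨hl, hv, hlv⟩)⟩

lemma exists_lt_of_mem_or_mem (hLM : ∀ l ∈ L, ∃ m ∈ M, l < m)
    (hMU : ∀ m ∈ M, ∃ u ∈ U, m < u) {v : α} (hv : v ∈ L ∨ v ∈ M) : ∃ u ∈ U, v < u := by
  rcases hv with hv | hv
  · obtain ⟨m, hm, hvm⟩ := hLM v hv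
    obtain ⟨u, hu, hmu⟩ := hMU m hm
    exact ⟨u, hu, hvm.trans hmu⟩
  · exact hMU v hv

lemma bipAdj.exists_common_upper (hMU : ∀ m ∈ M, ∃ u ∈ U, m < u) {a b : α}
    (h : bipAdj L M a b) : ∃ u ∈ U, a < u ∧ b < u := by
  rcases h with ⟨-, hb, hab⟩ | ⟨-, ha, hba⟩
  · obtain ⟨u, hu, hbu⟩ := hMU b hb
    exact ⟨u, hu, hab.trans hbu, hbu⟩
  · obtain ⟨u, hu, hau⟩ := hMU a ha
    exact ⟨u, hu, hau, hba.trans hau⟩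

lemma reflTransGen_of_lt_of_lt (hML : ∀ m ∈ M, ∃ l ∈ L, l < m) {v u u' : α}
    (hv : v ∈ L ∨ v ∈ M) (hu : u ∈ U) (hu' : u' ∈ U) (hvu : v < u) (hvu' : v < u') :
    ReflTransGen (bipAdj L U) u u' := by
  obtain ⟨l, hl, hlv, -⟩ := exists_le_reflTransGen hML hv
  exact .tail (.single (Or.inr ⟨hl, hu, hlv.trans_lt hvu⟩)) (Or.inl ⟨hl, hu', hlv.trans_lt hvu'⟩)

lemma reflTransGen_of_reflTransGen_of_lt (hML : ∀ m ∈ M, ∃ l ∈ L, l < m)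
    (hMU : ∀ m ∈ M, ∃ u ∈ U, m < u) {x y u u' : α} (hxy : ReflTransGen (bipAdj L M) x y)
    (hx : x ∈ L ∨ x ∈ M) (hu : u ∈ U) (hu' : u' ∈ U) (hxu : x < u) (hyu' : y < u') :
    ReflTransGen (bipAdj L U) u u' := by
  induction hxy generalizing u' with
  | refl => exact reflTransGen_of_lt_of_lt hML hx hu hu' hxu hyu'
  | tail _ hyz ih =>
    obtain ⟨u'', hu'', hyu'', hzu''⟩ := hyz.exists_common_upper hMU
    exact (ih hu'' hyu'').trans
      (reflTransGen_of_lt_of_lt hML hyz.mem_or_mem_right hu'' hu' hzu'' hyu')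

lemma not_le_of_mem_of_mem (hM : IsAntichain (· ≤ ·) (M : Set α))
    (hUM : ∀ u ∈ U, ∃ m ∈ M, m < u) {u y : α} (hu : u ∈ U) (hy : y ∈ M) : ¬u ≤ y := by
  intro huy
  obtain ⟨m, hm, hmu⟩ := hUM u hu
  have hmy := hmu.trans_le huy
  exact hM hm hy hmy.ne hmy.le

variable (hLM : ∀ l ∈ L, ∃ m ∈ M, l < m) (hML : ∀ m ∈ M, ∃ l ∈ L, l < m)
  (hMU : ∀ m ∈ M, ∃ u ∈ U, m < u)
include hLM hML hMU

lemma nodeIntOf_ssubset (hM : IsAntichain (· ≤ ·) (M : Set α)) (hUM : ∀ u ∈ U, ∃ m ∈ M, m < u)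
    {v u₀ : α} (hv : v ∈ L ∨ v ∈ M) (hu₀ : u₀ ∈ U) (hvu₀ : v < u₀) :
    nodeIntOf L M {x | ReflTransGen (bipAdj L M) v x} ⊂
      nodeIntOf L U {u | ReflTransGen (bipAdj L U) u₀ u} := by
  have upper_mem {x u : α} (hx : ReflTransGen (bipAdj L M) v x) (hu : u ∈ U) (hxu : x < u) :
      ReflTransGen (bipAdj L U) u₀ u :=
    reflTransGen_of_reflTransGen_of_lt hML hMU hx hv hu₀ hu hvu₀ hxu
  refine ⟨?_, fun hsup => ?_⟩
  · rintro p ⟨⟨x, ⟨hx, hxL⟩, hxp⟩, y, ⟨hy, hyM⟩, hpy⟩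
    obtain ⟨m, hm, hxm⟩ := hLM x hxL
    obtain ⟨u, hu, hmu⟩ := hMU m hm
    obtain ⟨u', hu', hyu'⟩ := hMU y hyM
    have hxu := hxm.trans hmu
    exact ⟨⟨x, ⟨(upper_mem hx hu hxu).tail (Or.inr ⟨hxL, hu, hxu⟩), hxL⟩, hxp⟩,
      u', ⟨upper_mem hy hu' hyu', hu'⟩, hpy.trans hyu'.le⟩
  · obtain ⟨l, hl, hlv, -⟩ := exists_le_reflTransGen hML hv
    have hlu₀ := hlv.trans_lt hvu₀
    obtain ⟨-, y, ⟨-, hyM⟩, hu₀y⟩ :=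
      hsup ⟨⟨l, ⟨.single (Or.inr ⟨hl, hu₀, hlu₀⟩), hl⟩, hlu₀.le⟩, u₀, ⟨.refl, hu₀⟩, le_rfl⟩
    exact not_le_of_mem_of_mem hM hUM hu₀ hyM hu₀y

omit hMU in
lemma eq_of_nodeIntOf_subset [DecidableEq α] (hL : IsAntichain (· ≤ ·) (L : Set α))
    {v u₀ : α} (hv : v ∈ L ∨ v ∈ M) (hu₀ : u₀ ∈ U) (hvu₀ : v < u₀) {N : Set α}
    (hN : IsNodeOf L U N)
    (hsub : nodeIntOf L M {x | ReflTransGen (bipAdj L M) v x} ⊆ nodeIntOf L U N) :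
    N = {u | ReflTransGen (bipAdj L U) u₀ u} := by
  obtain ⟨l, hl, hlv, hvl⟩ := exists_le_reflTransGen hML hv
  obtain ⟨m, hm, hlm⟩ := hLM l hl
  obtain ⟨⟨x, ⟨hx, hxL⟩, hxl⟩, -⟩ :=
    hsub ⟨⟨l, ⟨hvl, hl⟩, le_rfl⟩, m, ⟨hvl.tail (Or.inl ⟨hl, hm, hlm⟩), hm⟩, hlm.le⟩
  obtain rfl := hL.eq hxL hl hxl
  obtain ⟨w, -, rfl⟩ := hN
  have hu₀x : ReflTransGen (bipAdj L U) u₀ x := .single (Or.inr ⟨hl, hu₀, hlv.trans_lt hvu₀⟩)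
  exact (setOf_reflTransGen_eq hx).trans (setOf_reflTransGen_eq hu₀x).symm

theorem existsUnique_nodeIntOf_ssubset [DecidableEq α] (hL : IsAntichain (· ≤ ·) (L : Set α))
    (hM : IsAntichain (· ≤ ·) (M : Set α)) (hUM : ∀ u ∈ U, ∃ m ∈ M, m < u) {S : Set α}
    (hS : IsNodeOf L M S) :
    ∃! N : Set α, IsNodeOf L U N ∧ nodeIntOf L M S ⊂ nodeIntOf L U N := by
  obtain ⟨v, hv, rfl⟩ := hS
  replace hv := Finset.mem_union.1 hv
  obtain ⟨u₀, hu₀, hvu₀⟩ := exists_lt_of_mem_or_mem hLM hMU hv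
  exact ⟨_, ⟨⟨u₀, Finset.mem_union_right _ hu₀, rfl⟩,
      nodeIntOf_ssubset hLM hML hMU hM hUM hv hu₀ hvu₀⟩,
    fun N hN => eq_of_nodeIntOf_subset hLM hML hL hv hu₀ hvu₀ hN.1 hN.2.subset⟩

end BipartiteComponents

theorem stmt17_general {α : Type*} [PartialOrder α] [DecidableEq α]
    (Ap At As : Finset α)
    (hAp : IsAntichain (· ≤ ·) (Ap : Set α)) (hAt : IsAntichain (· ≤ ·) (At : Set α))
    (hAs : IsAntichain (· ≤ ·) (As : Set α))
    (hpt : ∀ a ∈ Ap, ∃ b ∈ At, a < b) (htp : ∀ b ∈ At, ∃ a ∈ Ap, a < b)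
    (hts : ∀ b ∈ At, ∃ c ∈ As, b < c) (hst : ∀ c ∈ As, ∃ b ∈ At, b < c) :
    (∀ S : Set α, IsNodeOf Ap At S →
      ∃! N : Set α, IsNodeOf Ap As N ∧ nodeIntOf Ap At S ⊂ nodeIntOf Ap As N) ∧
    (∀ S : Set α, IsNodeOf At As S →
      ∃! N : Set α, IsNodeOf Ap As N ∧ nodeIntOf At As S ⊂ nodeIntOf Ap As N) := by
  refine ⟨fun S => existsUnique_nodeIntOf_ssubset hpt htp hts hAp hAt hst, fun S hS => ?_⟩
  have hdual := existsUnique_nodeIntOf_ssubset (α := αᵒᵈ) (L := As) (M := At) (U := Ap)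
    hst hts htp hAs.to_dual hAt.to_dual hpt ((isNodeOf_toDual At As S).2 hS)
  simp only [isNodeOf_toDual, nodeIntOf_toDual At As S, nodeIntOf_toDual] at hdual
  exact hdual

/-- Proposition 2: when a maximum antichain `A_t` is inserted between consecutive
maximum antichains `A_p ⊑ A_s` (all bipartite posets regular, comparabilities
between `A_p` and `A_s` factoring through `A_t`), every node of `(A_p, A_t, <)`
or of `(A_t, A_s, <)` has a unique node `N` of `(A_p, A_s, <)` with
`Int(M) ⊊ Int(N)`. -/
theorem stmt17 {α : Type*} [PartialOrder α] [Fintype α] [DecidableEq α] (w : ℕ)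
    (hwidth : ∀ S : Finset α, IsAntichain (· ≤ ·) (S : Set α) → S.card ≤ w)
    (Ap At As : Finset α)
    (hAp : IsAntichain (· ≤ ·) (Ap : Set α)) (hAt : IsAntichain (· ≤ ·) (At : Set α))
    (hAs : IsAntichain (· ≤ ·) (As : Set α))
    (hcp : Ap.card = w) (hct : At.card = w) (hcs : As.card = w)
    (hd1 : Disjoint Ap At) (hd2 : Disjoint At As) (hd3 : Disjoint Ap As)
    (hpt : ∀ a ∈ Ap, ∃ b ∈ At, a < b) (htp : ∀ b ∈ At, ∃ a ∈ Ap, a < b)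
    (hts : ∀ b ∈ At, ∃ c ∈ As, b < c) (hst : ∀ c ∈ As, ∃ b ∈ At, b < c)
    (hreg1 : IsRegularBipartite Ap At) (hreg2 : IsRegularBipartite At As)
    (hreg3 : IsRegularBipartite Ap As)
    (hfactor : ∀ a ∈ Ap, ∀ c ∈ As, a < c → ∃ b ∈ At, a < b ∧ b < c) :
    (∀ S : Set α, IsNodeOf Ap At S →
      ∃! N : Set α, IsNodeOf Ap As N ∧ nodeIntOf Ap At S ⊂ nodeIntOf Ap As N) ∧
    (∀ S : Set α, IsNodeOf At As S →
      ∃! N : Set α, IsNodeOf Ap As N ∧ nodeIntOf At As S ⊂ nodeIntOf Ap As N) :=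
  stmt17_general Ap At As hAp hAt hAs hpt htp hts hst
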